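/- Abstract generalized derivation relation: under the same hypotheses on Z : 𝔥¹ → R ((i) harmonic product rule, (ii) duality Z∘φ = Z, (iii) Z(x^{l-1}y) = 0), for all s ≥ 0, positive integers m₁,…,m_s, l, and w ∈ 𝔥¹: Z(z^{m₁-1}y⋯z^{m_s-1}y·∂_l(w)) = −Z(z^{l-1}y z^{m₁-1}y⋯z^{m_s-1}y·w) + ∑_{i=1}^{s} Z(z^{m₁-1}y⋯z^{m_{i-1}-1}y z^{m_i-1}x z^{l-1}y z^{m_{i+1}-1}y⋯z^{m_s-1}y·w). -/

import Mathlib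

/-!
Conjugating by the involution `φ` turns `∂ = ∂_l` into the derivation `∂̃ = φ∂φ`, which kills `x`
and sends `y` to `-z x^{l-1} y`; and since `φ(z^{m-1}y) = -x^{m-1}y`, duality rewrites the
left-hand side as `±Z(z_{m₁}⋯z_{m_s} ∂̃(φ w))`. Pushing `∂̃` through a word `z_{k₁}⋯z_{k_r}`
one letter at a time reproduces the recursion of the harmonic product with `z_l`, and
`Z(z_l ∗ u) = Z(z_l) Z(u) = 0`, so `Z(u ∂̃ v) = Z((z_l ∗ u) v)`. Expanding `z_l ∗ z_{m₁}⋯z_{m_s}`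
and applying `φ` once more gives the right-hand side.
-/

noncomputable section

/-- 𝔥 = ℚ⟨x,y⟩. -/
abbrev H : Type := FreeAlgebra ℚ (Fin 2)

/-- The generator x. -/
def Xg : H := FreeAlgebra.ι ℚ (0 : Fin 2)

/-- The generator y. -/
def Yg : H := FreeAlgebra.ι ℚ (1 : Fin 2)

/-- z = x + y. -/
def Zg : H := Xg + Yg

/-- Membership in 𝔥¹ = ℚ + 𝔥y. -/
def MemH1 (a : H) : Prop := ∃ (q : ℚ) (h : H), a = algebraMap ℚ H q + h * Yg

/-- The word z_{k₁}⋯z_{k_d} ∈ 𝔥¹, where z_k = x^{k-1}y. -/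
def zword (K : List ℕ+) : H := (K.map fun k => Xg ^ ((k : ℕ) - 1) * Yg).prod

/-- The harmonic product of two words of 𝔥¹, landing in 𝔥¹ ⊆ 𝔥. -/
def hmulF : List ℕ+ → List ℕ+ → H
  | [], L => zword L
  | K, [] => zword K
  | k :: K, l :: L =>
      Xg ^ ((k : ℕ) - 1) * Yg * hmulF K (l :: L)
      + Xg ^ ((l : ℕ) - 1) * Yg * hmulF (k :: K) L
      + Xg ^ (((k : ℕ) + (l : ℕ)) - 1) * Yg * hmulF K L
termination_by K L => K.length + L.length

/-- The automorphism φ of ℚ⟨x,y⟩ with φ(x) = x + y and φ(y) = -y. -/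
def phi : H →ₐ[ℚ] H := FreeAlgebra.lift ℚ (fun i : Fin 2 => if i = 0 then Xg + Yg else -Yg)

/-- The product z^{m₁-1}y ⋯ z^{m_s-1}y. -/
def zy (ms : List ℕ+) : H := (ms.map fun m => Zg ^ ((m : ℕ) - 1) * Yg).prod

lemma zword_nil : zword [] = 1 := rfl

lemma zword_cons (k : ℕ+) (K : List ℕ+) :
    zword (k :: K) = Xg ^ ((k : ℕ) - 1) * Yg * zword K := by
  simp [zword]

lemma zword_append (K L : List ℕ+) : zword (K ++ L) = zword K * zword L := by
  simp [zword]

lemma zy_cons (m : ℕ+) (M : List ℕ+) : zy (m :: M) = Zg ^ ((m : ℕ) - 1) * Yg * zy M := by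
  simp [zy]

-- `zword` and `zy` elaborate by coercing the list to `List ℕ`; these are the forms over `ℕ+`.
lemma zword_eq_prod (K : List ℕ+) :
    zword K = (K.map fun k : ℕ+ => Xg ^ ((k : ℕ) - 1) * Yg).prod := by
  induction K with
  | nil => rfl
  | cons k K ih => rw [zword_cons, ih, List.map_cons, List.prod_cons, mul_assoc]

lemma zy_eq_prod (ms : List ℕ+) :
    zy ms = (ms.map fun m : ℕ+ => Zg ^ ((m : ℕ) - 1) * Yg).prod := by
  induction ms with
  | nil => rfl
  | cons m M ih => rw [zy_cons, ih, List.map_cons, List.prod_cons, mul_assoc]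

lemma Xg_mul_zword_cons (k : ℕ+) (K : List ℕ+) : Xg * zword (k :: K) = zword ((k + 1) :: K) := by
  have hk : ((k + 1 : ℕ+) : ℕ) - 1 = (k : ℕ) - 1 + 1 := by
    rw [PNat.add_coe, PNat.one_coe, Nat.add_sub_cancel, Nat.sub_add_cancel k.pos]
  rw [zword_cons, zword_cons, hk, pow_succ']
  simp only [mul_assoc]

lemma Yg_mul_zword (K : List ℕ+) : Yg * zword K = zword (1 :: K) := by
  simp [zword_cons]

lemma Xg_pow_mul_Zg_mul_Xg_pow (k l : ℕ+) :
    Xg ^ ((k : ℕ) - 1) * Zg * Xg ^ ((l : ℕ) - 1)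
      = Xg ^ ((k : ℕ) - 1) * Yg * Xg ^ ((l : ℕ) - 1) + Xg ^ ((k : ℕ) + (l : ℕ) - 1) := by
  have hkl : (k : ℕ) + (l : ℕ) - 1 = (k : ℕ) - 1 + 1 + ((l : ℕ) - 1) := by
    have := k.pos; have := l.pos; omega
  rw [hkl, pow_add, pow_succ, Zg, mul_add, add_mul]
  abel

lemma phi_Xg : phi Xg = Zg := by simp [phi, Xg, Yg, Zg]

lemma phi_Yg : phi Yg = -Yg := by simp [phi, Yg]

lemma phi_Zg : phi Zg = Xg := by
  rw [Zg, map_add, phi_Xg, phi_Yg, Zg, add_neg_cancel_right]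

lemma phi_phi (a : H) : phi (phi a) = a := by
  suffices phi.comp phi = AlgHom.id ℚ H from AlgHom.congr_fun this a
  ext i
  fin_cases i <;> simp [phi, Xg, Yg]

lemma phi_zy (ms : List ℕ+) : phi (zy ms) = (-1 : ℚ) ^ ms.length • zword ms := by
  induction ms with
  | nil => simp [zy, zword]
  | cons m M ih =>
    rw [zy_cons, map_mul, map_mul, map_pow, phi_Zg, phi_Yg, ih, zword_cons, List.length_cons,
      pow_succ, mul_smul, mul_smul_comm, neg_one_smul, mul_neg, neg_mul]

lemma hmulF_singleton_nil (l : ℕ+) : hmulF [l] [] = Xg ^ ((l : ℕ) - 1) * Yg := by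
  rw [hmulF] <;> simp [zword_cons, zword_nil]

lemma hmulF_singleton_cons (l m : ℕ+) (M : List ℕ+) :
    hmulF [l] (m :: M) = Xg ^ ((l : ℕ) - 1) * Yg * zword (m :: M)
      + Xg ^ ((m : ℕ) - 1) * Yg * hmulF [l] M
      + Xg ^ ((l : ℕ) + (m : ℕ) - 1) * Yg * zword M := by
  simp only [hmulF]

lemma hmulF_singleton_append_singleton (l k : ℕ+) (M : List ℕ+) :
    hmulF [l] (M ++ [k]) = hmulF [l] M * (Xg ^ ((k : ℕ) - 1) * Yg)
      + zword M * (Xg ^ ((k : ℕ) - 1) * Zg * Xg ^ ((l : ℕ) - 1) * Yg) := by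
  rw [Xg_pow_mul_Zg_mul_Xg_pow]
  induction M with
  | nil =>
    rw [List.nil_append, hmulF_singleton_cons, hmulF_singleton_nil, add_comm (l : ℕ)]
    simp only [zword_cons, zword_nil]
    noncomm_ring
  | cons m M ih =>
    rw [List.cons_append, hmulF_singleton_cons, ih, hmulF_singleton_cons]
    simp only [zword_cons, zword_append, zword_nil]
    noncomm_ring

section InsertSum

variable {α A : Type*} [Semiring A]

/-- `∑ᵢ f(m₁)⋯f(m_{i-1}) g(mᵢ) f(m_{i+1})⋯f(m_s)`: every letter in turn is replaced by `g`. -/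
def insertSum (f g : α → A) (ms : List α) : A :=
  ∑ i : Fin ms.length,
    ((ms.take i).map f).prod * g (ms.get i) * ((ms.drop (i + 1)).map f).prod

@[simp]
lemma insertSum_nil (f g : α → A) : insertSum f g [] = 0 := by
  simp [insertSum]

lemma insertSum_cons (f g : α → A) (m : α) (M : List α) :
    insertSum f g (m :: M) = g m * (M.map f).prod + f m * insertSum f g M := by
  simp only [insertSum, List.length_cons, Fin.sum_univ_succ, Finset.mul_sum]
  simp [mul_assoc]

end InsertSum

lemma hmulF_singleton (l : ℕ+) (ms : List ℕ+) :
    hmulF [l] ms = Xg ^ ((l : ℕ) - 1) * Yg * zword ms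
      + insertSum (fun k : ℕ+ => Xg ^ ((k : ℕ) - 1) * Yg)
          (fun k : ℕ+ => Xg ^ ((k : ℕ) - 1) * Zg * Xg ^ ((l : ℕ) - 1) * Yg) ms := by
  induction ms with
  | nil => simp [hmulF_singleton_nil, zword_nil]
  | cons m M ih =>
    rw [hmulF_singleton_cons, ih, insertSum_cons, ← zword_eq_prod, Xg_pow_mul_Zg_mul_Xg_pow,
      add_comm (l : ℕ)]
    simp only [zword_cons]
    noncomm_ring

def relationRHS (l : ℕ+) (ms : List ℕ+) : H :=
  -(Zg ^ ((l : ℕ) - 1) * Yg * zy ms)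
    + insertSum (fun k : ℕ+ => Zg ^ ((k : ℕ) - 1) * Yg)
        (fun k : ℕ+ => Zg ^ ((k : ℕ) - 1) * Xg * Zg ^ ((l : ℕ) - 1) * Yg) ms

lemma phi_insertSum (l : ℕ+) (M : List ℕ+) :
    phi (insertSum (fun k : ℕ+ => Zg ^ ((k : ℕ) - 1) * Yg)
        (fun k : ℕ+ => Zg ^ ((k : ℕ) - 1) * Xg * Zg ^ ((l : ℕ) - 1) * Yg) M)
      = (-1 : ℚ) ^ M.length • insertSum (fun k : ℕ+ => Xg ^ ((k : ℕ) - 1) * Yg)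
        (fun k : ℕ+ => Xg ^ ((k : ℕ) - 1) * Zg * Xg ^ ((l : ℕ) - 1) * Yg) M := by
  induction M with
  | nil => simp
  | cons m M ih =>
    rw [insertSum_cons, insertSum_cons, ← zy_eq_prod, ← zword_eq_prod]
    simp only [map_add, map_mul, map_pow, ih, phi_zy, phi_Xg, phi_Yg, phi_Zg, List.length_cons,
      pow_succ, mul_neg, mul_one, neg_smul, smul_add, mul_smul_comm, neg_mul, smul_neg]

lemma phi_relationRHS (l : ℕ+) (ms : List ℕ+) :
    phi (relationRHS l ms) = (-1 : ℚ) ^ ms.length • hmulF [l] ms := by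
  rw [relationRHS, map_add, phi_insertSum, hmulF_singleton, smul_add]
  simp only [map_neg, map_mul, map_pow, phi_Zg, phi_Yg, phi_zy, mul_neg, neg_mul,
    mul_smul_comm, smul_neg, neg_neg]

def H1 : Subalgebra ℚ H where
  carrier := {a | MemH1 a}
  mul_mem' := by
    rintro _ _ ⟨q, h, rfl⟩ ⟨q', h', rfl⟩
    refine ⟨q * q', q • h' + q' • h + h * Yg * h', ?_⟩
    simp only [map_mul, Algebra.algebraMap_eq_smul_one, add_mul, mul_add, smul_mul_assoc,
      mul_smul_comm, one_mul, mul_one, mul_assoc]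
    module
  add_mem' := by
    rintro _ _ ⟨q, h, rfl⟩ ⟨q', h', rfl⟩
    exact ⟨q + q', h + h', by rw [map_add, add_mul]; abel⟩
  algebraMap_mem' q := ⟨q, 0, by rw [zero_mul, add_zero]⟩

lemma mul_Yg_mem_H1 (h : H) : h * Yg ∈ H1 := ⟨0, h, by rw [map_zero, zero_add]⟩

lemma zy_mem_H1 (ms : List ℕ+) : zy ms ∈ H1 := by
  rw [zy_eq_prod]
  exact Subalgebra.list_prod_mem _ (by simp [mul_Yg_mem_H1])

lemma phi_mem_H1 {a : H} (ha : a ∈ H1) : phi a ∈ H1 := by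
  obtain ⟨q, h, rfl⟩ := ha
  refine ⟨q, -phi h, ?_⟩
  rw [map_add, map_mul, phi_Yg, AlgHom.commutes, mul_neg, neg_mul]

lemma relationRHS_mem_H1 (l : ℕ+) (ms : List ℕ+) : relationRHS l ms ∈ H1 := by
  refine add_mem (neg_mem (mul_mem (mul_Yg_mem_H1 _) (zy_mem_H1 ms))) (Subalgebra.sum_mem _ ?_)
  intro i _
  simp only [← zy_eq_prod]
  exact mul_mem (mul_mem (zy_mem_H1 _) (mul_Yg_mem_H1 _)) (zy_mem_H1 _)

lemma mul_mem_span_zword_ne_nil (a : H) {v : H}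
    (hv : v ∈ Submodule.span ℚ (zword '' {K | K ≠ []})) :
    a * v ∈ Submodule.span ℚ (zword '' {K | K ≠ []}) := by
  induction a using FreeAlgebra.induction generalizing v with
  | grade0 q =>
    rw [← Algebra.smul_def]
    exact Submodule.smul_mem _ q hv
  | grade1 i =>
    suffices hle : Submodule.span ℚ (zword '' {K | K ≠ []})
        ≤ (Submodule.span ℚ (zword '' {K | K ≠ []})).comap
            (LinearMap.mulLeft ℚ (FreeAlgebra.ι ℚ i)) from hle hv
    refine Submodule.span_le.mpr ?_
    rintro _ ⟨K, hK, rfl⟩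
    fin_cases i
    · obtain ⟨k, K, rfl⟩ := List.exists_cons_of_ne_nil hK
      exact Submodule.subset_span ⟨(k + 1) :: K, List.cons_ne_nil _ _, (Xg_mul_zword_cons k K).symm⟩
    · exact Submodule.subset_span ⟨1 :: K, List.cons_ne_nil _ _, (Yg_mul_zword K).symm⟩
  | mul a b ha hb =>
    rw [mul_assoc]
    exact ha (hb hv)
  | add a b ha hb =>
    rw [add_mul]
    exact add_mem (ha hv) (hb hv)

lemma mem_span_zword_of_mem_H1 {w : H} (hw : w ∈ H1) : w ∈ Submodule.span ℚ (Set.range zword) := by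
  obtain ⟨q, h, rfl⟩ := hw
  have hY : Yg ∈ Submodule.span ℚ (zword '' {K | K ≠ []}) :=
    Submodule.subset_span ⟨[1], List.cons_ne_nil _ _, by simp [zword_cons, zword_nil]⟩
  refine add_mem ?_ (Submodule.span_mono (Set.image_subset_range zword {K | K ≠ []}) ?_)
  · rw [Algebra.algebraMap_eq_smul_one]
    exact Submodule.smul_mem _ q (Submodule.subset_span ⟨[], zword_nil⟩)
  · exact mul_mem_span_zword_ne_nil h hY

section Leibniz

variable {R A : Type*} [CommRing R] [Ring A] [Algebra R A] {D : A →ₗ[R] A}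

lemma map_one_eq_zero_of_leibniz (hD : ∀ a b : A, D (a * b) = D a * b + a * D b) : D 1 = 0 := by
  simpa using hD 1 1

lemma map_algebraMap_eq_zero_of_leibniz (hD : ∀ a b : A, D (a * b) = D a * b + a * D b)
    (r : R) : D (algebraMap R A r) = 0 := by
  rw [Algebra.algebraMap_eq_smul_one, map_smul, map_one_eq_zero_of_leibniz hD, smul_zero]

lemma map_pow_eq_zero_of_leibniz (hD : ∀ a b : A, D (a * b) = D a * b + a * D b) {a : A}
    (ha : D a = 0) (n : ℕ) : D (a ^ n) = 0 := by
  induction n with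
  | zero => rw [pow_zero, map_one_eq_zero_of_leibniz hD]
  | succ n ih => rw [pow_succ, hD, ih, ha, zero_mul, mul_zero, add_zero]

end Leibniz

lemma map_mem_H1_of_leibniz {D : H →ₗ[ℚ] H} (hD : ∀ a b : H, D (a * b) = D a * b + a * D b)
    {c : H} (hY : D Yg = c * Yg) {a : H} (ha : a ∈ H1) : D a ∈ H1 := by
  obtain ⟨q, h, rfl⟩ := ha
  rw [map_add, map_algebraMap_eq_zero_of_leibniz hD, zero_add, hD, hY, ← mul_assoc]
  exact add_mem (mul_Yg_mem_H1 _) (mul_Yg_mem_H1 _)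

def phiConj (D : H →ₗ[ℚ] H) : H →ₗ[ℚ] H := phi.toLinearMap ∘ₗ D ∘ₗ phi.toLinearMap

lemma phi_map_eq_phiConj (D : H →ₗ[ℚ] H) (a : H) : phi (D a) = phiConj D (phi a) := by
  simp [phiConj, phi_phi]

lemma phiConj_leibniz {D : H →ₗ[ℚ] H} (hD : ∀ a b : H, D (a * b) = D a * b + a * D b)
    (a b : H) : phiConj D (a * b) = phiConj D a * b + a * phiConj D b := by
  simp [phiConj, hD, phi_phi]

section Derivation

variable (l : ℕ+) {D : H →ₗ[ℚ] H}

lemma phiConj_Xg (hx : D Xg = Xg * Zg ^ ((l : ℕ) - 1) * Yg)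
    (hy : D Yg = -(Xg * Zg ^ ((l : ℕ) - 1) * Yg)) : phiConj D Xg = 0 := by
  simp [phiConj, phi_Xg, Zg, hx, hy]

lemma phiConj_Yg (hy : D Yg = -(Xg * Zg ^ ((l : ℕ) - 1) * Yg)) :
    phiConj D Yg = -(Zg * Xg ^ ((l : ℕ) - 1) * Yg) := by
  simp [phiConj, phi_Yg, hy, phi_Xg, phi_Zg]

end Derivation

section Harmonic

variable {V : Type*} [AddCommGroup V] [Module ℚ V] (Zm : H →ₗ[ℚ] V) (l : ℕ+) {E : H →ₗ[ℚ] H}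

lemma map_hmulF_singleton_mul_zword (hZl : ∀ M : List ℕ+, Zm (hmulF [l] M) = 0)
    (hE : ∀ a b : H, E (a * b) = E a * b + a * E b) (hEx : E Xg = 0)
    (hEy : E Yg = -(Zg * Xg ^ ((l : ℕ) - 1) * Yg))
    (K M : List ℕ+) :
    Zm (hmulF [l] M * zword K) = Zm (zword M * E (zword K)) := by
  induction K generalizing M with
  | nil => rw [zword_nil, mul_one, map_one_eq_zero_of_leibniz hE, mul_zero, map_zero, hZl]
  | cons k K ih =>
    have hEk : E (Xg ^ ((k : ℕ) - 1) * Yg)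
        = -(Xg ^ ((k : ℕ) - 1) * Zg * Xg ^ ((l : ℕ) - 1) * Yg) := by
      rw [hE, map_pow_eq_zero_of_leibniz hE hEx, hEy, zero_mul, zero_add, mul_neg]
      simp only [mul_assoc]
    have hsplit : hmulF [l] M * zword (k :: K) = hmulF [l] (M ++ [k]) * zword K
        - zword M * (Xg ^ ((k : ℕ) - 1) * Zg * Xg ^ ((l : ℕ) - 1) * Yg) * zword K := by
      rw [hmulF_singleton_append_singleton, zword_cons]
      noncomm_ring
    calc Zm (hmulF [l] M * zword (k :: K))
        = Zm (hmulF [l] (M ++ [k]) * zword K)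
          - Zm (zword M * (Xg ^ ((k : ℕ) - 1) * Zg * Xg ^ ((l : ℕ) - 1) * Yg) * zword K) := by
          rw [hsplit, map_sub]
      _ = Zm (zword (M ++ [k]) * E (zword K))
          - Zm (zword M * (Xg ^ ((k : ℕ) - 1) * Zg * Xg ^ ((l : ℕ) - 1) * Yg) * zword K) := by
          rw [ih]
      _ = Zm (zword M * E (zword (k :: K))) := by
          rw [← map_sub, zword_cons, hE, hEk, zword_append, zword_cons, zword_nil]
          noncomm_ring

lemma map_hmulF_singleton_mul (hZl : ∀ M : List ℕ+, Zm (hmulF [l] M) = 0)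
    (hE : ∀ a b : H, E (a * b) = E a * b + a * E b) (hEx : E Xg = 0)
    (hEy : E Yg = -(Zg * Xg ^ ((l : ℕ) - 1) * Yg))
    {v : H} (hv : v ∈ Submodule.span ℚ (Set.range zword))
    (M : List ℕ+) : Zm (hmulF [l] M * v) = Zm (zword M * E v) :=
  LinearMap.eqOn_span' (f := Zm ∘ₗ LinearMap.mulLeft ℚ (hmulF [l] M))
    (g := Zm ∘ₗ LinearMap.mulLeft ℚ (zword M) ∘ₗ E)
    (by rintro _ ⟨K, rfl⟩; exact map_hmulF_singleton_mul_zword Zm l hZl hE hEx hEy K M) hv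

end Harmonic

/-- Generalized derivation relation (abstract form): under the same hypotheses
on Z, for all m₁,…,m_s, l ≥ 1 and w ∈ 𝔥¹,
Z(z^{m₁-1}y⋯z^{m_s-1}y ∂_l(w)) = −Z(z^{l-1}y z^{m₁-1}y⋯z^{m_s-1}y w)
  + ∑ᵢ Z(z^{m₁-1}y⋯z^{m_i-1}x z^{l-1}y⋯z^{m_s-1}y w). -/
theorem abstract_generalized_derivation_relation (R : Type*) [CommRing R] [Algebra ℚ R]
    (Zm : H →ₗ[ℚ] R)
    (hharm : ∀ K L : List ℕ+, Zm (hmulF K L) = Zm (zword K) * Zm (zword L))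
    (hdual : ∀ a : H, MemH1 a → Zm (phi a) = Zm a)
    (hdepth1 : ∀ l : ℕ+, Zm (Xg ^ ((l : ℕ) - 1) * Yg) = 0)
    (l : ℕ+) (D : H →ₗ[ℚ] H)
    (hD : ∀ a b : H, D (a * b) = D a * b + a * D b)
    (hx : D Xg = Xg * Zg ^ ((l : ℕ) - 1) * Yg)
    (hy : D Yg = -(Xg * Zg ^ ((l : ℕ) - 1) * Yg))
    (ms : List ℕ+) (w : H) (hw : MemH1 w) :
    Zm (zy ms * D w)
      = -(Zm (Zg ^ ((l : ℕ) - 1) * Yg * zy ms * w))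
        + ∑ i : Fin ms.length,
            Zm (zy (ms.take (i : ℕ))
              * (Zg ^ ((ms.get i : ℕ) - 1) * Xg * Zg ^ ((l : ℕ) - 1) * Yg)
              * zy (ms.drop ((i : ℕ) + 1)) * w) := by
  have hZl : ∀ M : List ℕ+, Zm (hmulF [l] M) = 0 := fun M => by
    rw [hharm, zword_cons, zword_nil, mul_one, hdepth1, zero_mul]
  have hstar := map_hmulF_singleton_mul Zm l hZl (phiConj_leibniz hD) (phiConj_Xg l hx hy)
    (phiConj_Yg l hy) (mem_span_zword_of_mem_H1 (phi_mem_H1 hw)) ms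
  have hDw : D w ∈ H1 := map_mem_H1_of_leibniz hD (hy.trans (neg_mul _ _).symm) hw
  calc Zm (zy ms * D w)
      = Zm (phi (zy ms * D w)) := (hdual _ (mul_mem (zy_mem_H1 ms) hDw)).symm
    _ = (-1 : ℚ) ^ ms.length • Zm (zword ms * phiConj D (phi w)) := by
        rw [map_mul phi, phi_zy, phi_map_eq_phiConj, smul_mul_assoc, map_smul]
    _ = (-1 : ℚ) ^ ms.length • Zm (hmulF [l] ms * phi w) := by rw [hstar]
    _ = Zm (phi (relationRHS l ms * w)) := by
        rw [map_mul phi, phi_relationRHS, smul_mul_assoc, map_smul]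
    _ = Zm (relationRHS l ms * w) := hdual _ (mul_mem (relationRHS_mem_H1 l ms) hw)
    _ = _ := by
        simp only [relationRHS, insertSum, add_mul, neg_mul, Finset.sum_mul, map_add, map_neg,
          map_sum, ← zy_eq_prod]

end
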